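/- arXiv:1908.02801 — 2 statements merged into one kernel-verified Lean document; each statement's English description precedes it below -/
import Mathlib

section
/- Let p ≥ 5 be prime and define the Alltop sequence f ∈ ℂ^p by f(t) = p^{-1/2} · exp(2πi t³ / p) for t ∈ ZMod p. Then ⟨f, M^ℓ f⟩ = 0 for every ℓ ∈ {1,…,p-1}, and |⟨f, M^ℓ T^k f⟩|² = 1/p for every k ∈ {1,…,p-1} and every ℓ ∈ {0,…,p-1}. -/
/-! With `ψ` the standard additive character of `ZMod p`, the Alltop sequence is
`f = p^{-1/2} ψ(t³)`, so `⟨f, M^ℓ T^k f⟩ = p⁻¹ ∑_j ψ(ℓ j + (j - k)³ - j³)`. For `k = 0` the cubes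
cancel and a nontrivial character sums to zero. For `k ≠ 0` the phase is quadratic in `j` with
leading coefficient `-3k`, a unit as `p > 3`; Weyl differencing shows that every quadratic
character sum over a finite field of odd characteristic has squared modulus the field size. -/

open scoped ComplexConjugate

/-- The translation operator `T` on `ℂ^d = (ZMod d → ℂ)`: `(T v) j = v (j - 1)`. -/
noncomputable def gT (d : ℕ) : (ZMod d → ℂ) ≃ₗ[ℂ] (ZMod d → ℂ) :=
  LinearEquiv.funCongrLeft ℂ ℂ (Equiv.subRight (1 : ZMod d))

/-- The modulation operator `M` on `ℂ^d`: `(M v) j = ω ^ j * v j` with `ω = exp (2 π i / d)`. -/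
noncomputable def gM (d : ℕ) : (ZMod d → ℂ) ≃ₗ[ℂ] (ZMod d → ℂ) :=
  LinearEquiv.piCongrRight fun j =>
    LinearEquiv.smulOfNeZero ℂ ℂ (Complex.exp (2 * Real.pi * Complex.I / d) ^ j.val)
      (pow_ne_zero _ (Complex.exp_ne_zero _))

/-- The standard inner product on `ℂ^d`, conjugate-linear in the first argument. -/
noncomputable def inn {d : ℕ} [NeZero d] (u w : ZMod d → ℂ) : ℂ :=
  ∑ j : ZMod d, conj (u j) * w j

/-- The Gabor system `G(v) = {M^ℓ T^k v}` is `(α, β)`-biangular: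
`|⟨v, T^k v⟩|² = α` for `k ∈ {1,…,d-1}` and `|⟨v, M^ℓ T^k v⟩|² = β` for
`k ∈ {0,…,d-1}`, `ℓ ∈ {1,…,d-1}`. -/
def Biangular (d : ℕ) [NeZero d] (v : ZMod d → ℂ) (α β : ℝ) : Prop :=
  (∀ k : ℕ, 1 ≤ k → k ≤ d - 1 → ‖inn v ((gT d ^ k) v)‖ ^ 2 = α) ∧
  (∀ k ℓ : ℕ, k ≤ d - 1 → 1 ≤ ℓ → ℓ ≤ d - 1 →
    ‖inn v ((gM d ^ ℓ) ((gT d ^ k) v))‖ ^ 2 = β)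

/-- `B_d`: the set of nonzero `v ∈ ℂ^d` whose Gabor system is biangular. -/
def Bset (d : ℕ) [NeZero d] : Set (ZMod d → ℂ) :=
  {v | v ≠ 0 ∧ ∃ α β : ℝ, Biangular d v α β}

open Finset ZMod

lemma gT_pow_apply (d k : ℕ) (v : ZMod d → ℂ) (j : ZMod d) : (gT d ^ k) v j = v (j - k) := by
  induction k generalizing v with
  | zero => simp
  | succ n ih =>
    rw [pow_succ, LinearEquiv.mul_apply, ih]
    change v (j - n - 1) = _
    push_cast
    ring_nf

lemma gM_apply {d : ℕ} [NeZero d] (v : ZMod d → ℂ) (j : ZMod d) :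
    gM d v j = stdAddChar j * v j := by
  change Complex.exp _ ^ j.val * v j = _
  rw [← Complex.exp_nat_mul, ← natCast_zmod_val j, stdAddChar_apply, toCircle_natCast,
    natCast_zmod_val]
  congr 2
  ring

lemma gM_pow_apply {d : ℕ} [NeZero d] (ℓ : ℕ) (v : ZMod d → ℂ) (j : ZMod d) :
    (gM d ^ ℓ) v j = stdAddChar (j * (ℓ : ZMod d)) * v j := by
  induction ℓ generalizing v with
  | zero => simp
  | succ n ih =>
    rw [pow_succ, LinearEquiv.mul_apply, ih, gM_apply, ← mul_assoc, ← AddChar.map_add_eq_mul]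
    push_cast
    ring_nf

lemma AddChar.norm_sum_comp_sq {G : Type*} [AddCommGroup G] [Fintype G] (ψ : AddChar G ℂ)
    (Q : G → G) :
    (‖∑ x, ψ (Q x)‖ ^ 2 : ℂ) = ∑ h, ∑ x, ψ (Q (x + h) - Q x) := by
  rw [sum_comm, ← Complex.conj_mul', map_sum, sum_mul_sum]
  refine sum_congr rfl fun x _ => ?_
  rw [← Equiv.sum_comp (Equiv.addLeft x)]
  refine sum_congr rfl fun h _ => ?_
  rw [← AddChar.map_neg_eq_conj, ← AddChar.map_add_eq_mul, neg_add_eq_sub]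
  rfl

lemma AddChar.norm_sum_quadratic_sq {F : Type*} [Field F] [Fintype F] {ψ : AddChar F ℂ}
    (hψ : ψ.IsPrimitive) (h2 : (2 : F) ≠ 0) {a : F} (ha : a ≠ 0) (b c : F) :
    ‖∑ x, ψ (a * x ^ 2 + b * x + c)‖ ^ 2 = Fintype.card F := by
  classical
  have hdiff (h x : F) : (a * (x + h) ^ 2 + b * (x + h) + c) - (a * x ^ 2 + b * x + c) =
      (a * h ^ 2 + b * h) + x * (2 * a * h) := by ring
  have h2a : ∀ h : F, 2 * a * h = 0 ↔ h = 0 := by simp [h2, ha]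
  have inner (h : F) :
      ∑ x, ψ ((a * (x + h) ^ 2 + b * (x + h) + c) - (a * x ^ 2 + b * x + c)) =
        if h = 0 then (Fintype.card F : ℂ) else 0 := by
    simp_rw [hdiff h, ψ.map_add_eq_mul, ← mul_sum, ψ.sum_mulShift _ hψ, h2a]
    split_ifs with h0 <;> simp [h0]
  have key := ψ.norm_sum_comp_sq fun x => a * x ^ 2 + b * x + c
  simp only [inner, sum_ite_eq', mem_univ, if_true] at key
  exact_mod_cast key

lemma inn_gM_pow_gT_pow_eq_sum {d : ℕ} [NeZero d] (c : ℝ) (Q : ZMod d → ZMod d)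
    (v : ZMod d → ℂ) (hv : ∀ t, v t = c * stdAddChar (Q t)) (k ℓ : ℕ) :
    inn v ((gM d ^ ℓ) ((gT d ^ k) v)) =
      c ^ 2 * ∑ j, stdAddChar (j * (ℓ : ZMod d) + Q (j - k) - Q j) := by
  rw [inn, mul_sum]
  refine sum_congr rfl fun j _ => ?_
  rw [gM_pow_apply, gT_pow_apply, hv, hv, map_mul, Complex.conj_ofReal,
    ← AddChar.map_neg_eq_conj, sub_eq_add_neg _ (Q j), AddChar.map_add_eq_mul,
    AddChar.map_add_eq_mul]
  ring

lemma ZMod.natCast_ne_zero_of_lt {p k : ℕ} (hk0 : k ≠ 0) (hkp : k < p) :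
    (k : ZMod p) ≠ 0 := by
  rw [Ne, natCast_eq_zero_iff]
  exact fun hdvd => hk0 (Nat.eq_zero_of_dvd_of_lt hdvd hkp)

/-- the Alltop sequence `f t = p^{-1/2} exp(2 π i t³ / p)` (for prime `p ≥ 5`)
satisfies `⟨f, M^ℓ f⟩ = 0` for `ℓ ∈ {1,…,p-1}` and `|⟨f, M^ℓ T^k f⟩|² = 1/p` for
`k ∈ {1,…,p-1}`, `ℓ ∈ {0,…,p-1}`. -/
theorem alltop_sequence (p : ℕ) [Fact p.Prime] [NeZero p] (hp : 5 ≤ p)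
    (f : ZMod p → ℂ)
    (hf : ∀ t : ZMod p, f t = ((Real.sqrt p : ℂ))⁻¹ *
      Complex.exp (2 * Real.pi * Complex.I * (t.val : ℂ) ^ 3 / p)) :
    (∀ ℓ : ℕ, 1 ≤ ℓ → ℓ ≤ p - 1 → inn f ((gM p ^ ℓ) f) = 0) ∧
    (∀ k ℓ : ℕ, 1 ≤ k → k ≤ p - 1 → ℓ ≤ p - 1 →
      ‖inn f ((gM p ^ ℓ) ((gT p ^ k) f))‖ ^ 2 = 1 / p) := by
  have hf' (t : ZMod p) : f t = ((√p)⁻¹ : ℝ) * stdAddChar (t ^ 3) := by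
    have ht : t ^ 3 = ((t.val ^ 3 : ℕ) : ZMod p) := by simp
    rw [hf, ht, stdAddChar_apply, toCircle_natCast]
    push_cast
    rfl
  have hinn := inn_gM_pow_gT_pow_eq_sum _ _ f hf'
  have hψ := isPrimitive_stdAddChar p
  refine ⟨fun ℓ hℓ0 hℓp => ?_, fun k ℓ hk0 hkp _ => ?_⟩
  · have hℓ : (ℓ : ZMod p) ≠ 0 := natCast_ne_zero_of_lt (by omega) (by omega)
    simpa [AddChar.sum_mulShift _ hψ, hℓ] using hinn 0 ℓ
  · have h2 : (2 : ZMod p) ≠ 0 := by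
      exact_mod_cast natCast_ne_zero_of_lt (p := p) two_ne_zero (by omega)
    have h3 : (3 : ZMod p) ≠ 0 := by
      exact_mod_cast natCast_ne_zero_of_lt (p := p) three_ne_zero (by omega)
    have hk : (k : ZMod p) ≠ 0 := natCast_ne_zero_of_lt (by omega) (by omega)
    have hphase (j : ZMod p) : j * ℓ + (j - k) ^ 3 - j ^ 3 =
        -(3 * k) * j ^ 2 + (ℓ + 3 * k ^ 2) * j + -k ^ 3 := by ring
    have hS := AddChar.norm_sum_quadratic_sq hψ h2 (neg_ne_zero.2 (mul_ne_zero h3 hk))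
      ((ℓ : ZMod p) + 3 * k ^ 2) (-k ^ 3)
    simp only [hinn, hphase]
    have hp0 : (0 : ℝ) ≤ p := Nat.cast_nonneg p
    rw [norm_mul, mul_pow, hS, ZMod.card, ← Complex.ofReal_pow, Complex.norm_real,
      Real.norm_eq_abs, sq_abs, inv_pow, Real.sq_sqrt hp0]
    field_simp
end

section
/- Let u ∈ ℂ² be the vector with coordinates u(0) = 1 and u(1) = (1+√2)i, and let v = u/‖u‖₂. Then G(v) is (0, 1/2)-biangular: ⟨v, T v⟩ = 0 and |⟨v, M^ℓ T^k v⟩|² = 1/2 for every k ∈ {0,1} and ℓ = 1. That is, v generates a Gabor MUB in ℂ². -/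
open scoped ComplexConjugate

/-!
For `v = (a, b i)` with `a, b` real, `⟨v, T v⟩ = 0` automatically, while `⟨v, M v⟩ = a² - b²`
and `⟨v, M T v⟩ = 2abi`. Normalising `(1, b i)` divides these by `1 + b²`, and both squared
moduli equal `1/2` as soon as `b² = 2b + 1`, which `b = 1 + √2` satisfies.
-/

open Complex

lemma gM_apply_s11 (d : ℕ) (w : ZMod d → ℂ) (j : ZMod d) :
    gM d w j = exp (2 * Real.pi * I / d) ^ j.val * w j := rfl

lemma exp_two_pi_I_div_two : exp (2 * Real.pi * I / (2 : ℕ)) = -1 := by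
  rw [show (2 * Real.pi * I / (2 : ℕ) : ℂ) = Real.pi * I by push_cast; ring, exp_pi_mul_I]

lemma sum_zmod_two {M : Type*} [AddCommMonoid M] (f : ZMod 2 → M) : ∑ j, f j = f 0 + f 1 :=
  Fin.sum_univ_two f

lemma inn_zmod_two (u w : ZMod 2 → ℂ) : inn u w = conj (u 0) * w 0 + conj (u 1) * w 1 :=
  sum_zmod_two _

lemma gT_two_apply_zero (w : ZMod 2 → ℂ) : gT 2 w 0 = w 1 := rfl

lemma gT_two_apply_one (w : ZMod 2 → ℂ) : gT 2 w 1 = w 0 := rfl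

lemma gM_two_apply_zero (w : ZMod 2 → ℂ) : gM 2 w 0 = w 0 := by
  rw [gM_apply_s11, ZMod.val_zero, pow_zero, one_mul]

lemma gM_two_apply_one (w : ZMod 2 → ℂ) : gM 2 w 1 = -w 1 := by
  rw [gM_apply_s11, exp_two_pi_I_div_two, ZMod.val_one, pow_one, neg_one_mul]

section RealImaginary

variable {v : ZMod 2 → ℂ} {a b : ℝ}

lemma inn_gT_two_of_real_imaginary (h0 : v 0 = a) (h1 : v 1 = b * I) :
    inn v (gT 2 v) = 0 := by
  simp only [inn_zmod_two, gT_two_apply_zero, gT_two_apply_one, h0, h1, map_mul, conj_ofReal,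
    conj_I]
  ring

lemma inn_gM_two_of_real_imaginary (h0 : v 0 = a) (h1 : v 1 = b * I) :
    inn v (gM 2 v) = (a ^ 2 - b ^ 2 : ℝ) := by
  simp only [inn_zmod_two, gM_two_apply_zero, gM_two_apply_one, h0, h1, map_mul, conj_ofReal,
    conj_I]
  push_cast
  linear_combination (b : ℂ) ^ 2 * I_sq

lemma inn_gM_gT_two_of_real_imaginary (h0 : v 0 = a) (h1 : v 1 = b * I) :
    inn v (gM 2 (gT 2 v)) = (2 * a * b : ℝ) * I := by
  simp only [inn_zmod_two, gM_two_apply_zero, gM_two_apply_one, gT_two_apply_zero,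
    gT_two_apply_one, h0, h1, map_mul, conj_ofReal, conj_I]
  push_cast
  ring

end RealImaginary

lemma exists_real_coords_of_normalized {b : ℝ} {u v : ZMod 2 → ℂ} (hu0 : u 0 = 1)
    (hu1 : u 1 = b * I) (hv : ∀ j, v j = u j / (Real.sqrt (∑ i, ‖u i‖ ^ 2) : ℂ)) :
    ∃ c : ℝ, c ^ 2 = (1 + b ^ 2)⁻¹ ∧ v 0 = c ∧ v 1 = (c * b : ℝ) * I := by
  have hnorm : ∑ i, ‖u i‖ ^ 2 = 1 + b ^ 2 := by
    rw [sum_zmod_two]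
    simp [hu0, hu1]
  refine ⟨(Real.sqrt (1 + b ^ 2))⁻¹, ?_, ?_, ?_⟩
  · rw [inv_pow, Real.sq_sqrt (by positivity)]
  · rw [hv, hu0, hnorm]; push_cast; ring
  · rw [hv, hu1, hnorm]; push_cast; ring

section SilverRatio

variable {b c : ℝ}

lemma sq_sub_mul_sq_sq_eq_half (hb : b ^ 2 = 2 * b + 1) (hc : c ^ 2 = (1 + b ^ 2)⁻¹) :
    (c ^ 2 - (c * b) ^ 2) ^ 2 = 1 / 2 := by
  have : 1 + b ^ 2 ≠ 0 := by positivity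
  rw [show c ^ 2 - (c * b) ^ 2 = c ^ 2 * (1 - b ^ 2) by ring, hc]
  field_simp
  nlinarith

lemma two_mul_mul_mul_sq_eq_half (hb : b ^ 2 = 2 * b + 1) (hc : c ^ 2 = (1 + b ^ 2)⁻¹) :
    (2 * c * (c * b)) ^ 2 = 1 / 2 := by
  have : 1 + b ^ 2 ≠ 0 := by positivity
  rw [show (2 * c * (c * b)) ^ 2 = 4 * (c ^ 2) ^ 2 * b ^ 2 by ring, hc]
  field_simp
  nlinarith

end SilverRatio

/-- with `u = (1, (1 + √2) i)` and `v = u / ‖u‖₂`, the Gabor system `G(v)`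
is `(0, 1/2)`-biangular: `⟨v, T v⟩ = 0` and `|⟨v, M T^k v⟩|² = 1/2` for `k ∈ {0, 1}`. -/
theorem gabor_mub_dim_two (u v : ZMod 2 → ℂ)
    (hu0 : u 0 = 1) (hu1 : u 1 = (1 + Real.sqrt 2) * Complex.I)
    (hv : ∀ j, v j = u j / (Real.sqrt (∑ i, ‖u i‖ ^ 2) : ℂ)) :
    inn v ((gT 2) v) = 0 ∧
    (∀ k : ℕ, k ≤ 1 → ‖inn v ((gM 2) ((gT 2 ^ k) v))‖ ^ 2 = 1 / 2) := by
  set b := 1 + Real.sqrt 2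
  have hb : b ^ 2 = 2 * b + 1 := by
    linear_combination Real.sq_sqrt (show (0 : ℝ) ≤ 2 by norm_num)
  obtain ⟨c, hc, h0, h1⟩ := exists_real_coords_of_normalized (b := b) hu0
    (by rw [hu1, Complex.ofReal_add, Complex.ofReal_one]) hv
  refine ⟨inn_gT_two_of_real_imaginary h0 h1, fun k hk => ?_⟩
  interval_cases k
  · rw [pow_zero, LinearEquiv.coe_one, id_eq, inn_gM_two_of_real_imaginary h0 h1,
      Complex.norm_real, Real.norm_eq_abs, sq_abs, sq_sub_mul_sq_sq_eq_half hb hc]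
  · rw [pow_one, inn_gM_gT_two_of_real_imaginary h0 h1, norm_mul, norm_I, mul_one,
      Complex.norm_real, Real.norm_eq_abs, sq_abs, two_mul_mul_mul_sq_eq_half hb hc]
end
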